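/- arXiv:2004.09071 — 6 statements merged into one kernel-verified Lean document; each statement's English description precedes it below -/
import Mathlib

section
/- Let α ∈ (0,1), let c, τ > 0, and set η_k = c/k^α for k ≥ 1. Let (s_k)_{k≥1} be a sequence of nonnegative real numbers satisfying s_{k+1} ≤ (1 − η_k) s_k + τ η_k² for all k ≥ 1. Then s_k = O(k^{−α}), i.e., there exist a constant C > 0 and an index K such that s_k ≤ C k^{−α} for all k ≥ K. -/
/-!
Set `v k = k ^ (-α)`, so that `η k = c v k`, and show `s k ≤ C v k` by induction from a large
index `K` on, with `C ≥ 2 τ c`. Since `α ≤ 1`, the sequence `v` decreases slowly: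
`v k - v (k + 1) ≤ v k / k`, and since `α < 1`, eventually `1 / k ≤ (c / 2) v k`. Hence
`C v (k + 1) ≥ C v k - (C c / 2) (v k)²`, while the recursion gives
`s (k + 1) ≤ C v k - C c (v k)² + τ c² (v k)²`, and `τ c² ≤ C c / 2` closes the step.
-/

open Real Filter Topology

lemma rpow_neg_sub_rpow_neg_add_one_le {α x : ℝ} (hα : α ≤ 1) (hx : 0 < x) :
    x ^ (-α) - (x + 1) ^ (-α) ≤ x ^ (-α) / (x + 1) := by
  have hx1 : 0 < x + 1 := by linarith
  have hratio : x / (x + 1) ≤ (x / (x + 1)) ^ α := by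
    simpa using rpow_le_rpow_of_exponent_ge (div_pos hx hx1)
      ((div_le_one hx1).mpr (by linarith)) hα
  have hsucc : (x + 1) ^ (-α) = x ^ (-α) * (x / (x + 1)) ^ α := by
    rw [div_rpow hx.le hx1.le, rpow_neg hx.le, rpow_neg hx1.le]
    field_simp
  calc x ^ (-α) - (x + 1) ^ (-α) ≤ x ^ (-α) - x ^ (-α) * (x / (x + 1)) := by
        rw [hsucc]; gcongr
    _ = x ^ (-α) / (x + 1) := by field_simp; ring

lemma eventually_inv_le_mul_rpow_neg {α ε : ℝ} (hα : α < 1) (hε : 0 < ε) :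
    ∀ᶠ x : ℝ in atTop, x⁻¹ ≤ ε * x ^ (-α) := by
  have hlim : Tendsto (fun x : ℝ => x ^ (α - 1)) atTop (𝓝 0) := by
    simpa using tendsto_rpow_neg_atTop (y := 1 - α) (by linarith)
  filter_upwards [hlim.eventually (eventually_le_nhds hε), eventually_gt_atTop 0]
    with x hxε hx
  calc x⁻¹ = x ^ (α - 1) * x ^ (-α) := by
        rw [← rpow_add hx, show α - 1 + -α = -1 by ring, rpow_neg_one]
    _ ≤ ε * x ^ (-α) := by gcongr

lemma le_mul_of_le_one_sub_mul_add_sq {c τ C v w s s' : ℝ} (hc : 0 ≤ c) (hC : 0 ≤ C)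
    (hτC : 2 * τ * c ≤ C) (hcv : c * v ≤ 1) (hvw : v - w ≤ c / 2 * v ^ 2)
    (hs : s ≤ C * v) (hs' : s' ≤ (1 - c * v) * s + τ * (c * v) ^ 2) :
    s' ≤ C * w := by
  have h1 : (1 - c * v) * s ≤ (1 - c * v) * (C * v) := by gcongr
  have h2 : τ * c ^ 2 * v ^ 2 ≤ C * c / 2 * v ^ 2 := by gcongr; nlinarith
  have h3 : C * (v - w) ≤ C * (c / 2 * v ^ 2) := by gcongr
  nlinarith

theorem stmt2_general (α c τ : ℝ) (hα : 0 < α) (hα1 : α < 1) (hc : 0 < c) (hτ : 0 < τ)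
    (η : ℕ → ℝ) (hη : ∀ k : ℕ, 1 ≤ k → η k = c / (k : ℝ) ^ α)
    (s : ℕ → ℝ)
    (hrec : ∀ k : ℕ, 1 ≤ k → s (k + 1) ≤ (1 - η k) * s k + τ * (η k) ^ 2) :
    ∃ C : ℝ, 0 < C ∧ ∃ K : ℕ, ∀ k : ℕ, K ≤ k → s k ≤ C * (k : ℝ) ^ (-α) := by
  have hsmall : ∀ᶠ x : ℝ in atTop, c * x ^ (-α) ≤ 1 :=
    ((tendsto_rpow_neg_atTop hα).const_mul c).eventually (eventually_le_nhds (by simp))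
  obtain ⟨K, hK⟩ := eventually_atTop.mp <| (eventually_ge_atTop 1).and <|
    tendsto_natCast_atTop_atTop.eventually <|
      hsmall.and (eventually_inv_le_mul_rpow_neg hα1 (half_pos hc))
  set C := max (2 * τ * c) (s K * (K : ℝ) ^ α)
  have hCpos : 0 < C := lt_max_of_lt_left (by positivity)
  refine ⟨C, hCpos, K, fun k hk => ?_⟩
  induction k, hk using Nat.le_induction with
  | base =>
    have hKpos : (0 : ℝ) < K := by exact_mod_cast (hK K le_rfl).1
    calc s K = s K * (K : ℝ) ^ α * (K : ℝ) ^ (-α) := by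
          rw [mul_assoc, ← rpow_add hKpos, add_neg_cancel, rpow_zero, mul_one]
      _ ≤ C * (K : ℝ) ^ (-α) := by gcongr; exact le_max_right _ _
  | succ k hk ih =>
    obtain ⟨hk1, hcv, hinv⟩ := hK k hk
    have hkpos : (0 : ℝ) < k := by exact_mod_cast hk1
    have hηk : η k = c * (k : ℝ) ^ (-α) := by
      rw [hη k hk1, rpow_neg hkpos.le, div_eq_mul_inv]
    have hvw : (k : ℝ) ^ (-α) - ((k : ℝ) + 1) ^ (-α) ≤ c / 2 * ((k : ℝ) ^ (-α)) ^ 2 :=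
      calc (k : ℝ) ^ (-α) - ((k : ℝ) + 1) ^ (-α) ≤ (k : ℝ) ^ (-α) / ((k : ℝ) + 1) :=
            rpow_neg_sub_rpow_neg_add_one_le hα1.le hkpos
        _ ≤ (k : ℝ) ^ (-α) * (k : ℝ)⁻¹ := by
            rw [div_eq_mul_inv]; gcongr; linarith
        _ ≤ (k : ℝ) ^ (-α) * (c / 2 * (k : ℝ) ^ (-α)) := by gcongr
        _ = c / 2 * ((k : ℝ) ^ (-α)) ^ 2 := by ring
    push_cast
    exact le_mul_of_le_one_sub_mul_add_sq hc.le hCpos.le (le_max_left _ _) hcv hvw ih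
      (hηk ▸ hrec k hk1)

theorem stmt2 (α c τ : ℝ) (hα : 0 < α) (hα1 : α < 1) (hc : 0 < c) (hτ : 0 < τ)
    (η : ℕ → ℝ) (hη : ∀ k : ℕ, 1 ≤ k → η k = c / (k : ℝ) ^ α)
    (s : ℕ → ℝ) (hs : ∀ k : ℕ, 1 ≤ k → 0 ≤ s k)
    (hrec : ∀ k : ℕ, 1 ≤ k → s (k + 1) ≤ (1 - η k) * s k + τ * (η k) ^ 2) :
    ∃ C : ℝ, 0 < C ∧ ∃ K : ℕ, ∀ k : ℕ, K ≤ k → s k ≤ C * (k : ℝ) ^ (-α) :=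
  stmt2_general α c τ hα hα1 hc hτ η hη s hrec
end

section
/- Let E be a real inner product space and f : E → ℝ a convex function. Suppose u minimizes x ↦ f(x) + (1/2)‖x − y‖² over E and u' minimizes x ↦ f(x) + (1/2)‖x − y'‖² over E (i.e., u = Prox_f(y) and u' = Prox_f(y')). Then ‖u − u'‖² ≤ ⟨u − u', y − y'⟩; that is, the proximity operator Prox_f is firmly non-expansive. -/
/-! The minimality of `u = Prox_f(y)`, tested along the segment from `u` to any `v` and
differentiated at `u`, says that `y - u` is a subgradient of `f` at `u`. Subgradients of a
convex function form a monotone operator, and for `y - u` and `y' - u'` monotonicity reads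
`0 ≤ ⟪(y - y') - (u - u'), u - u'⟫`. -/

open Set Filter Topology
open scoped RealInnerProductSpace

lemma le_of_forall_le_add_mul {a b c : ℝ} (h : ∀ t ∈ Ioc (0 : ℝ) 1, a ≤ b + t * c) : a ≤ b := by
  have hlim : Tendsto (fun t : ℝ => b + t * c) (𝓝 0) (𝓝 (b + 0 * c)) :=
    tendsto_const_nhds.add (tendsto_id.mul tendsto_const_nhds)
  rw [zero_mul, add_zero] at hlim
  replace hlim := hlim.mono_left (nhdsWithin_le_nhds (s := Ioi 0))
  exact ge_of_tendsto hlim (mem_of_superset (Ioc_mem_nhdsGT one_pos) h)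

section Subgradient

variable {E : Type*} [NormedAddCommGroup E] [InnerProductSpace ℝ E]

def HasSubgradientAt (f : E → ℝ) (g u : E) : Prop :=
  ∀ v, f u + ⟪g, v - u⟫ ≤ f v

theorem HasSubgradientAt.inner_sub_nonneg {f : E → ℝ} {g g' u u' : E}
    (h : HasSubgradientAt f g u) (h' : HasSubgradientAt f g' u') :
    0 ≤ ⟪g - g', u - u'⟫ := by
  have h₁ := h u'
  have h₂ := h' u
  have : ⟪g, u' - u⟫ = -⟪g, u - u'⟫ := by rw [← inner_neg_right, neg_sub]
  rw [inner_sub_left]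
  linarith

theorem hasSubgradientAt_of_forall_add_half_norm_sq_le {f : E → ℝ}
    (hf : ConvexOn ℝ univ f) {y u : E}
    (hu : ∀ x, f u + (1 / 2) * ‖u - y‖ ^ 2 ≤ f x + (1 / 2) * ‖x - y‖ ^ 2) :
    HasSubgradientAt f (y - u) u := by
  intro v
  refine le_of_forall_le_add_mul (c := (1 / 2) * ‖v - u‖ ^ 2) fun t ⟨ht₀, ht₁⟩ => ?_
  have hconv : f ((1 - t) • u + t • v) ≤ (1 - t) * f u + t * f v :=
    hf.2 (mem_univ u) (mem_univ v) (by linarith) ht₀.le (by ring)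
  have hmin := hu ((1 - t) • u + t • v)
  have hnorm : ‖(1 - t) • u + t • v - y‖ ^ 2
      = ‖u - y‖ ^ 2 - 2 * t * ⟪y - u, v - u⟫ + t ^ 2 * ‖v - u‖ ^ 2 := by
    rw [show (1 - t) • u + t • v - y = (u - y) + t • (v - u) by module, norm_add_sq_real,
      real_inner_smul_right, norm_smul, Real.norm_of_nonneg ht₀.le, ← neg_sub y u, inner_neg_left]
    ring
  rw [hnorm] at hmin
  have hscaled : t * (f u + ⟪y - u, v - u⟫) ≤ t * (f v + t * ((1 / 2) * ‖v - u‖ ^ 2)) := by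
    nlinarith
  exact le_of_mul_le_mul_left hscaled ht₀

end Subgradient

theorem stmt3 {E : Type*} [NormedAddCommGroup E] [InnerProductSpace ℝ E]
    (f : E → ℝ) (hf : ConvexOn ℝ Set.univ f)
    (y y' u u' : E)
    (hu : ∀ x, f u + (1 / 2) * ‖u - y‖ ^ 2 ≤ f x + (1 / 2) * ‖x - y‖ ^ 2)
    (hu' : ∀ x, f u' + (1 / 2) * ‖u' - y'‖ ^ 2 ≤ f x + (1 / 2) * ‖x - y'‖ ^ 2) :
    ‖u - u'‖ ^ 2 ≤ ⟪u - u', y - y'⟫ := by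
  have hmono := (hasSubgradientAt_of_forall_add_half_norm_sq_le hf hu).inner_sub_nonneg
    (hasSubgradientAt_of_forall_add_half_norm_sq_le hf hu')
  rw [show y - u - (y' - u') = (y - y') - (u - u') by abel, inner_sub_left,
    real_inner_self_eq_norm_sq, real_inner_comm] at hmono
  linarith
end

section
/- Let E be a real inner product space and f : E → ℝ a convex function. Suppose u minimizes x ↦ f(x) + (1/2)‖x − y‖² over E and u' minimizes x ↦ f(x) + (1/2)‖x − y'‖² over E (i.e., u = Prox_f(y) and u' = Prox_f(y')). Then ‖(y − u) − (y' − u')‖² ≤ ⟨(y − u) − (y' − u'), y − y'⟩; that is, the operator I − Prox_f is firmly non-expansive. -/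
open scoped RealInnerProductSpace

lemma prox_subgrad {E : Type*} [NormedAddCommGroup E] [InnerProductSpace ℝ E]
    (f : E → ℝ) (hf : ConvexOn ℝ Set.univ f) (y u : E)
    (hu : ∀ x, f u + (1 / 2) * ‖u - y‖ ^ 2 ≤ f x + (1 / 2) * ‖x - y‖ ^ 2)
    (x : E) : ⟪y - u, x - u⟫ ≤ f x - f u := by
  have key : ∀ t : ℝ, 0 < t → t ≤ 1 →
      ⟪y - u, x - u⟫ ≤ f x - f u + t / 2 * ‖x - u‖ ^ 2 := by
    intro t ht ht1
    have hcvx : f (u + t • (x - u)) ≤ (1 - t) * f u + t * f x := by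
      have := hf.2 (Set.mem_univ u) (Set.mem_univ x) (by linarith : (0:ℝ) ≤ 1 - t)
        ht.le (by ring)
      have heq : (1 - t) • u + t • x = u + t • (x - u) := by
        simp [smul_sub, sub_smul]; abel
      rwa [heq] at this
    have hmin := hu (u + t • (x - u))
    have hnorm : ‖u + t • (x - u) - y‖ ^ 2
        = ‖u - y‖ ^ 2 + 2 * (t * ⟪u - y, x - u⟫) + t ^ 2 * ‖x - u‖ ^ 2 := by
      have : u + t • (x - u) - y = (u - y) + t • (x - u) := by abel
      rw [this, norm_add_sq_real, real_inner_smul_right, norm_smul]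
      simp [Real.norm_eq_abs, abs_of_pos ht, mul_pow]
    have hinner : ⟪y - u, x - u⟫ = -⟪u - y, x - u⟫ := by
      rw [← inner_neg_left]; simp
    rw [hnorm] at hmin
    have ht' : f u ≤ f x + ⟪u - y, x - u⟫ + t / 2 * ‖x - u‖ ^ 2 := by
      have h2 : t * f u ≤ t * f x + t * ⟪u - y, x - u⟫ + t * (t / 2 * ‖x - u‖ ^ 2) := by
        nlinarith [hmin, hcvx]
      exact le_of_mul_le_mul_left
        (by nlinarith : t * f u ≤ t * (f x + ⟪u - y, x - u⟫ + t / 2 * ‖x - u‖ ^ 2)) ht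
    rw [hinner]; linarith
  -- take limit t → 0⁺
  have hT : Filter.Tendsto (fun t : ℝ => f x - f u + t / 2 * ‖x - u‖ ^ 2)
      (nhdsWithin 0 (Set.Ioi 0)) (nhds (f x - f u)) := by
    have : Filter.Tendsto (fun t : ℝ => f x - f u + t / 2 * ‖x - u‖ ^ 2)
        (nhds 0) (nhds (f x - f u + 0 / 2 * ‖x - u‖ ^ 2)) := by
      exact (Continuous.tendsto (by continuity) 0)
    simp at this
    exact this.mono_left nhdsWithin_le_nhds
  refine ge_of_tendsto hT ?_
  filter_upwards [self_mem_nhdsWithin,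
    eventually_nhdsWithin_of_eventually_nhds (eventually_lt_nhds (by norm_num : (0:ℝ) < 1))]
    with t ht ht1
  exact key t ht ht1.le

theorem stmt4 {E : Type*} [NormedAddCommGroup E] [InnerProductSpace ℝ E]
    (f : E → ℝ) (hf : ConvexOn ℝ Set.univ f)
    (y y' u u' : E)
    (hu : ∀ x, f u + (1 / 2) * ‖u - y‖ ^ 2 ≤ f x + (1 / 2) * ‖x - y‖ ^ 2)
    (hu' : ∀ x, f u' + (1 / 2) * ‖u' - y'‖ ^ 2 ≤ f x + (1 / 2) * ‖x - y'‖ ^ 2) :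
    ‖(y - u) - (y' - u')‖ ^ 2 ≤ ⟪(y - u) - (y' - u'), y - y'⟫ := by
  have h1 := prox_subgrad f hf y u hu u'
  have h2 := prox_subgrad f hf y' u' hu' u
  have hsum : ⟪y - u, u' - u⟫ + ⟪y' - u', u - u'⟫ ≤ 0 := by linarith
  have h3 : (0:ℝ) ≤ ⟪(y - u) - (y' - u'), u - u'⟫ := by
    have e1 : ⟪y - u, u' - u⟫ = -⟪y - u, u - u'⟫ := by
      rw [← inner_neg_right]; simp
    rw [inner_sub_left] at *
    linarith
  have e2 : ⟪(y - u) - (y' - u'), y - y'⟫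
      = ‖(y - u) - (y' - u')‖ ^ 2 + ⟪(y - u) - (y' - u'), u - u'⟫ := by
    rw [← real_inner_self_eq_norm_sq, ← inner_add_right]
    congr 1
    abel
  linarith
end

section
/- Let f : ℝ^m → ℝ be a convex differentiable function whose gradient ∇f is Lipschitz continuous with Lipschitz constant 1/β for some β > 0. Then for all x, y ∈ ℝ^m, ⟨∇f(x) − ∇f(y), x − y⟩ ≥ β ‖∇f(x) − ∇f(y)‖². -/
/-!
Along a segment, the `L`-Lipschitz gradient gives the descent bound
`f y ≤ f x + ⟪∇f x, y - x⟫ + L/2 ‖y - x‖²`. Evaluating it at `y` and the convexity bound at `x`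
in the gradient step `z = y - L⁻¹ (∇f y - ∇f x)` improves convexity to
`f x + ⟪∇f x, y - x⟫ + 1/(2L) ‖∇f y - ∇f x‖² ≤ f y`; adding this to its copy with `x` and `y`
exchanged gives cocoercivity.
-/

open scoped RealInnerProductSpace

open Set

section Cocoercivity

variable {E : Type*} [NormedAddCommGroup E] [InnerProductSpace ℝ E] [CompleteSpace E]
  {f : E → ℝ}

theorem hasDerivAt_apply_add_smul {x v : E} {t : ℝ} (hf : DifferentiableAt ℝ f (x + t • v)) :
    HasDerivAt (fun s : ℝ => f (x + s • v)) ⟪gradient f (x + t • v), v⟫ t := by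
  have hline : HasDerivAt (fun s : ℝ => x + s • v) v t := by
    simpa using ((hasDerivAt_id t).smul_const v).const_add x
  simpa [InnerProductSpace.toDual_apply_apply, Function.comp_def] using
    (hasGradientAt_iff_hasFDerivAt.mp hf.hasGradientAt).comp_hasDerivAt t hline

theorem ConvexOn.add_inner_gradient_le (hconv : ConvexOn ℝ univ f) {x : E}
    (hf : DifferentiableAt ℝ f x) (y : E) :
    f x + ⟪gradient f x, y - x⟫ ≤ f y := by
  have hline : ConvexOn ℝ univ (fun s : ℝ => f (x + s • (y - x))) := by
    have hcomp := hconv.comp_affineMap (AffineMap.lineMap x y : ℝ →ᵃ[ℝ] E)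
    simpa only [preimage_univ, Function.comp_def, AffineMap.lineMap_apply, vsub_eq_sub,
      vadd_eq_add, add_comm _ x] using hcomp
  have hderiv := hasDerivAt_apply_add_smul (t := 0) (v := y - x) (by simpa using hf)
  have hslope := hline.le_slope_of_hasDerivAt (mem_univ 0) (mem_univ 1) one_pos hderiv
  simp only [slope_def_field, zero_smul, add_zero, one_smul, add_sub_cancel, sub_zero,
    div_one] at hslope
  linarith

theorem inner_gradient_add_smul_sub_le {L : ℝ}
    (hL : ∀ x y : E, ‖gradient f x - gradient f y‖ ≤ L * ‖x - y‖) (x v : E)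
    {t : ℝ} (ht : 0 ≤ t) :
    ⟪gradient f (x + t • v) - gradient f x, v⟫ ≤ L * t * ‖v‖ ^ 2 :=
  calc ⟪gradient f (x + t • v) - gradient f x, v⟫
      ≤ ‖gradient f (x + t • v) - gradient f x‖ * ‖v‖ := real_inner_le_norm _ _
    _ ≤ L * ‖(x + t • v) - x‖ * ‖v‖ := by gcongr; exact hL _ _
    _ = L * t * ‖v‖ ^ 2 := by
      rw [add_sub_cancel_left, norm_smul, Real.norm_of_nonneg ht]; ring

theorem le_add_inner_gradient_add_sq {L : ℝ}
    (hL : ∀ x y : E, ‖gradient f x - gradient f y‖ ≤ L * ‖x - y‖) (hf : Differentiable ℝ f)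
    (x y : E) :
    f y ≤ f x + ⟪gradient f x, y - x⟫ + L / 2 * ‖y - x‖ ^ 2 := by
  set v := y - x
  have hfence : ∀ t ∈ Icc (0 : ℝ) 1,
      f (x + t • v) ≤ f x + t * ⟪gradient f x, v⟫ + L / 2 * t ^ 2 * ‖v‖ ^ 2 := by
    refine image_le_of_deriv_right_le_deriv_boundary
      (f' := fun t => ⟪gradient f (x + t • v), v⟫)
      (B := fun t => f x + t * ⟪gradient f x, v⟫ + L / 2 * t ^ 2 * ‖v‖ ^ 2)
      (B' := fun t => ⟪gradient f x, v⟫ + L * t * ‖v‖ ^ 2)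
      (fun t _ => (hasDerivAt_apply_add_smul (hf _)).continuousAt.continuousWithinAt)
      (fun t _ => (hasDerivAt_apply_add_smul (hf _)).hasDerivWithinAt)
      (by simp) (by fun_prop) (fun t _ => ?_) (fun t ht => ?_)
    · exact (((((hasDerivAt_id t).mul_const _).const_add (f x)).add
        (((hasDerivAt_pow 2 t).const_mul (L / 2)).mul_const (‖v‖ ^ 2))).congr_deriv
        (by push_cast; ring)).hasDerivWithinAt
    · have := inner_gradient_add_smul_sub_le hL x v ht.1
      rw [inner_sub_left] at this
      linarith
  simpa [v] using hfence 1 (by simp)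

theorem ConvexOn.add_inner_gradient_add_sq_le (hconv : ConvexOn ℝ univ f) {L : ℝ}
    (hL : ∀ x y : E, ‖gradient f x - gradient f y‖ ≤ L * ‖x - y‖) (hf : Differentiable ℝ f)
    (hLpos : 0 < L) (x y : E) :
    f x + ⟪gradient f x, y - x⟫ + 1 / (2 * L) * ‖gradient f y - gradient f x‖ ^ 2 ≤ f y := by
  set u := gradient f y - gradient f x
  set z := y - L⁻¹ • u
  have hdescent := le_add_inner_gradient_add_sq hL hf y z
  have hconvex := hconv.add_inner_gradient_le (hf x) z
  have hzy : z - y = -(L⁻¹ • u) := by simp [z]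
  have hzx : z - x = (y - x) - L⁻¹ • u := by simp only [z]; abel
  rw [hzy, norm_neg, norm_smul, Real.norm_of_nonneg (inv_nonneg.2 hLpos.le), inner_neg_right,
    real_inner_smul_right] at hdescent
  rw [hzx, inner_sub_right, real_inner_smul_right] at hconvex
  have huu : ⟪gradient f y, u⟫ - ⟪gradient f x, u⟫ = ‖u‖ ^ 2 := by
    rw [← inner_sub_left, real_inner_self_eq_norm_sq]
  have hLinv : L * L⁻¹ = 1 := mul_inv_cancel₀ hLpos.ne'
  linear_combination hdescent + hconvex - L⁻¹ * huu + ‖u‖ ^ 2 * L⁻¹ / 2 * hLinv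

theorem ConvexOn.sq_norm_gradient_sub_le_inner (hconv : ConvexOn ℝ univ f) {L : ℝ}
    (hL : ∀ x y : E, ‖gradient f x - gradient f y‖ ≤ L * ‖x - y‖) (hf : Differentiable ℝ f)
    (hLpos : 0 < L) (x y : E) :
    1 / L * ‖gradient f x - gradient f y‖ ^ 2 ≤ ⟪gradient f x - gradient f y, x - y⟫ := by
  have hxy := hconv.add_inner_gradient_add_sq_le hL hf hLpos x y
  have hyx := hconv.add_inner_gradient_add_sq_le hL hf hLpos y x
  rw [← norm_neg, neg_sub] at hxy
  rw [inner_sub_left, ← neg_sub x y, inner_neg_right] at *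
  have hhalf : 1 / (2 * L) = 1 / L / 2 := by ring
  rw [hhalf] at hxy hyx
  linarith

end Cocoercivity

theorem stmt5 (m : ℕ) (f : EuclideanSpace ℝ (Fin m) → ℝ)
    (hconv : ConvexOn ℝ Set.univ f) (hdiff : Differentiable ℝ f)
    (β : ℝ) (hβ : 0 < β)
    (hlip : ∀ x y : EuclideanSpace ℝ (Fin m),
      ‖gradient f x - gradient f y‖ ≤ (1 / β) * ‖x - y‖) :
    ∀ x y : EuclideanSpace ℝ (Fin m),
      β * ‖gradient f x - gradient f y‖ ^ 2 ≤ ⟪gradient f x - gradient f y, x - y⟫ := by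
  intro x y
  simpa using hconv.sq_norm_gradient_sub_le_inner hlip hdiff (by positivity) x y
end

section
/- Let f₁ : ℝ^m → ℝ be convex, f₂ : ℝ^d → ℝ differentiable, B : ℝ^d → ℝ^m linear with adjoint Bᵀ, and let λ, γ > 0. Define h : ℝ^m → ℝ by h(x) = (λ/γ) f₁((γ/λ) x). Suppose x* ∈ ℝ^d and v* ∈ ℝ^m are such that v* is a subgradient of f₁ at B x* and ∇f₂(x*) + Bᵀ v* = 0. Set w = (λ/γ) B(x* − γ ∇f₂(x*)) + (I − λ B Bᵀ) v*. Then: (i) the point w − v* minimizes x ↦ h(x) + (1/2)‖x − w‖² over ℝ^m, i.e., v* = (I − Prox_h)(w); and (ii) x* = x* − γ ∇f₂(x*) − γ Bᵀ v*. In other words, (x*, v*) satisfies the fixed-point equations of the primal dual fixed point iteration. -/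
open scoped RealInnerProductSpace

theorem stmt9 (m d : ℕ)
    (f₁ : EuclideanSpace ℝ (Fin m) → ℝ) (hf₁ : ConvexOn ℝ Set.univ f₁)
    (f₂ : EuclideanSpace ℝ (Fin d) → ℝ) (hf₂ : Differentiable ℝ f₂)
    (B : EuclideanSpace ℝ (Fin d) →L[ℝ] EuclideanSpace ℝ (Fin m))
    (lam γ : ℝ) (hlam : 0 < lam) (hγ : 0 < γ)
    (h : EuclideanSpace ℝ (Fin m) → ℝ)
    (hh : ∀ x, h x = (lam / γ) * f₁ ((γ / lam) • x))
    (xs : EuclideanSpace ℝ (Fin d)) (vs : EuclideanSpace ℝ (Fin m))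
    (hsub : ∀ z, f₁ (B xs) + ⟪vs, z - B xs⟫ ≤ f₁ z)
    (hopt : gradient f₂ xs + ContinuousLinearMap.adjoint B vs = 0)
    (w : EuclideanSpace ℝ (Fin m))
    (hw : w = (lam / γ) • B (xs - γ • gradient f₂ xs) +
      (vs - lam • B (ContinuousLinearMap.adjoint B vs))) :
    (∀ x, h (w - vs) + (1 / 2) * ‖(w - vs) - w‖ ^ 2 ≤ h x + (1 / 2) * ‖x - w‖ ^ 2) ∧
      xs = xs - γ • gradient f₂ xs - γ • ContinuousLinearMap.adjoint B vs := by
  have hγ' : γ ≠ 0 := ne_of_gt hγ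
  have hlam' : lam ≠ 0 := ne_of_gt hlam
  have hg : gradient f₂ xs = -(ContinuousLinearMap.adjoint B vs) := by
    linear_combination (norm := module) hopt
  have hweq : w = (lam / γ) • B xs + vs := by
    rw [hw, hg]
    simp only [map_sub, map_smul, map_neg, smul_sub, smul_neg, neg_neg, smul_smul,
      div_mul_cancel₀ lam hγ']
    module
  have hwv : w - vs = (lam / γ) • B xs := by rw [hweq]; abel
  have hpos : 0 ≤ lam / γ := le_of_lt (div_pos hlam hγ)
  constructor
  · intro x
    rw [hh, hh, hwv]
    rw [smul_smul, div_mul_div_comm, mul_comm γ lam, div_self (by positivity), one_smul]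
    have hns : (lam / γ) • B xs - w = -vs := by rw [hweq]; abel
    rw [hns, norm_neg]
    have key := hsub ((γ / lam) • x)
    have key2 := mul_le_mul_of_nonneg_left key hpos
    rw [mul_add] at key2
    have hin : (lam / γ) * ⟪vs, (γ / lam) • x - B xs⟫ =
        ⟪vs, x - w⟫ + ‖vs‖ ^ 2 := by
      rw [inner_sub_right, real_inner_smul_right, hweq, inner_sub_right, inner_add_right,
        real_inner_smul_right, real_inner_self_eq_norm_sq]
      field_simp
      ring
    rw [hin] at key2
    have hsq : (0:ℝ) ≤ ‖vs + (x - w)‖ ^ 2 := sq_nonneg _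
    rw [norm_add_sq_real] at hsq
    nlinarith [key2, hsq]
  · have : γ • gradient f₂ xs + γ • ContinuousLinearMap.adjoint B vs = 0 := by
      rw [← smul_add, hopt, smul_zero]
    linear_combination (norm := module) this
end

section
/- Let ν, c, M > 0 and α ∈ (0,1), and set γ_k = c/k^α. Let (a_k)_{k≥1} be a sequence of nonnegative real numbers for which there exists an index k₀ with ν γ_{k₀} ≤ 1 and a_{k+1} ≤ (1 − ν γ_k) a_k + γ_k² M for all k ≥ k₀. Then a_k = O(k^{−α}): there exist a constant C > 0 and an index K such that a_k ≤ C k^{−α} for all k ≥ K. -/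
theorem stmt13 (ν c M α : ℝ) (hν : 0 < ν) (hc : 0 < c) (hM : 0 < M)
    (hα : 0 < α) (hα1 : α < 1)
    (γ : ℕ → ℝ) (hγ : ∀ k : ℕ, 1 ≤ k → γ k = c / (k : ℝ) ^ α)
    (a : ℕ → ℝ) (ha : ∀ k : ℕ, 1 ≤ k → 0 ≤ a k)
    (k₀ : ℕ) (hk₀ : 1 ≤ k₀) (hηk₀ : ν * γ k₀ ≤ 1)
    (hrec : ∀ k : ℕ, k₀ ≤ k → a (k + 1) ≤ (1 - ν * γ k) * a k + (γ k) ^ 2 * M) :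
    ∃ C : ℝ, 0 < C ∧ ∃ K : ℕ, ∀ k : ℕ, K ≤ k → a k ≤ C * (k : ℝ) ^ (-α) := by
  have hνc : 0 < ν * c := mul_pos hν hc
  set B : ℝ := 2 / (ν * c) with hB
  have hBpos : 0 < B := div_pos two_pos hνc
  obtain ⟨K₁, hK₁⟩ := exists_nat_ge (B ^ (1 / (1 - α)))
  set K : ℕ := max k₀ (max K₁ 1) with hKdef
  have hKk₀ : k₀ ≤ K := le_max_left _ _
  have hK1 : 1 ≤ K := le_trans (le_max_right _ _) (le_max_right _ _)
  have hKK₁ : K₁ ≤ K := le_trans (le_max_left _ _) (le_max_right _ _)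
  have hKpos : (0 : ℝ) < (K : ℝ) := by exact_mod_cast hK1
  set C : ℝ := max (2 * c * M / ν) (a K * (K : ℝ) ^ α) with hCdef
  have hCpos : 0 < C := lt_of_lt_of_le
    (div_pos (by positivity) hν) (le_max_left _ _)
  have hC1 : 2 * c * M / ν ≤ C := le_max_left _ _
  refine ⟨C, hCpos, K, ?_⟩
  have h1α : (0 : ℝ) < 1 - α := by linarith
  -- key: for real x ≥ K, x^(1-α) ≥ B
  have hxB : ∀ k : ℕ, K ≤ k → B ≤ (k : ℝ) ^ (1 - α) := by
    intro k hk
    have h1 : B ^ (1 / (1 - α)) ≤ (k : ℝ) := le_trans hK₁ (by exact_mod_cast hKK₁.trans hk)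
    calc B = (B ^ (1 / (1 - α))) ^ (1 - α) := by
            rw [← Real.rpow_mul hBpos.le, one_div_mul_cancel h1α.ne', Real.rpow_one]
      _ ≤ (k : ℝ) ^ (1 - α) :=
            Real.rpow_le_rpow (Real.rpow_nonneg hBpos.le _) h1 h1α.le
  intro k hk
  induction k, hk using Nat.le_induction with
  | base =>
      have hle : a K * (K : ℝ) ^ α ≤ C := le_max_right _ _
      have h2 : a K * (K : ℝ) ^ α * (K : ℝ) ^ (-α) ≤ C * (K : ℝ) ^ (-α) :=
        mul_le_mul_of_nonneg_right hle (Real.rpow_pos_of_pos hKpos _).le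
      calc a K = a K * ((K : ℝ) ^ α * (K : ℝ) ^ (-α)) := by
              rw [← Real.rpow_add hKpos, add_neg_cancel, Real.rpow_zero, mul_one]
        _ = a K * (K : ℝ) ^ α * (K : ℝ) ^ (-α) := by ring
        _ ≤ C * (K : ℝ) ^ (-α) := h2
  | succ k hkK IH =>
      have hk1 : 1 ≤ k := le_trans hK1 hkK
      have hx1 : (1 : ℝ) ≤ (k : ℝ) := by exact_mod_cast hk1
      have hxpos : (0 : ℝ) < (k : ℝ) := by linarith
      have htpos : 0 < (k : ℝ) ^ (-α) := Real.rpow_pos_of_pos hxpos _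
      have hγk : γ k = c * (k : ℝ) ^ (-α) := by
        rw [hγ k hk1, Real.rpow_neg hxpos.le, div_eq_mul_inv]
      have hk₀pos : (0 : ℝ) < (k₀ : ℝ) := by exact_mod_cast hk₀
      have hmono : (k : ℝ) ^ (-α) ≤ (k₀ : ℝ) ^ (-α) := by
        apply Real.rpow_le_rpow_of_nonpos hk₀pos
        · exact_mod_cast le_trans hKk₀ hkK
        · linarith
      have hγk₀ : γ k₀ = c * (k₀ : ℝ) ^ (-α) := by
        rw [hγ k₀ hk₀, Real.rpow_neg hk₀pos.le, div_eq_mul_inv]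
      have hnonneg : 0 ≤ 1 - ν * γ k := by
        have h1 : ν * (c * (k : ℝ) ^ (-α)) ≤ ν * (c * (k₀ : ℝ) ^ (-α)) := by
          have := mul_le_mul_of_nonneg_left hmono hc.le
          exact mul_le_mul_of_nonneg_left this hν.le
        rw [hγk, ← hγk₀] at *
        linarith
      -- x^(α-1) ≤ ν*c/2
      have hx1a : (k : ℝ) ^ (α - 1) ≤ ν * c / 2 := by
        have hb : B ≤ (k : ℝ) ^ (1 - α) := hxB k hkK
        have heq1 : (k : ℝ) ^ (α - 1) = ((k : ℝ) ^ (1 - α))⁻¹ := by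
          rw [← Real.rpow_neg hxpos.le]; ring_nf
        have hinv : ((k : ℝ) ^ (1 - α))⁻¹ ≤ B⁻¹ := by
          apply inv_anti₀ hBpos hb
        have hBinv : B⁻¹ = ν * c / 2 := by rw [hB, inv_div]
        rw [heq1, ← hBinv]; exact hinv
      -- t * x⁻¹ ≤ (νc/2) t²
      have h1 : (k : ℝ) ^ (-α) * ((k : ℝ))⁻¹ = ((k : ℝ) ^ (-α)) ^ 2 * (k : ℝ) ^ (α - 1) := by
        have e1 : ((k : ℝ) ^ (-α)) ^ 2 * (k : ℝ) ^ (α - 1)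
            = (k : ℝ) ^ (-α) * ((k : ℝ) ^ (-α) * (k : ℝ) ^ (α - 1)) := by ring
        rw [e1, ← Real.rpow_add hxpos]
        have e2 : -α + (α - 1) = -1 := by ring
        rw [e2, Real.rpow_neg_one]
      have hdiv : (k : ℝ) ^ (-α) * ((k : ℝ))⁻¹ ≤ ν * c / 2 * ((k : ℝ) ^ (-α)) ^ 2 := by
        rw [h1]
        have := mul_le_mul_of_nonneg_left hx1a (sq_nonneg ((k : ℝ) ^ (-α)))
        linarith
      -- (x+1)^(-α) ≥ t - t * x⁻¹
      have hstep : (k : ℝ) ^ (-α) - (k : ℝ) ^ (-α) * ((k : ℝ))⁻¹ ≤ ((k : ℝ) + 1) ^ (-α) := by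
        have hx1pos : 0 < (k : ℝ) + 1 := by linarith
        have hf1 : 0 < (k : ℝ) / ((k : ℝ) + 1) := div_pos hxpos hx1pos
        have hf2 : (k : ℝ) / ((k : ℝ) + 1) ≤ 1 := by
          rw [div_le_one hx1pos]; linarith
        have hfrac : (k : ℝ) / ((k : ℝ) + 1) ≤ ((k : ℝ) / ((k : ℝ) + 1)) ^ α := by
          calc (k : ℝ) / ((k : ℝ) + 1) = ((k : ℝ) / ((k : ℝ) + 1)) ^ (1 : ℝ) :=
                (Real.rpow_one _).symm
            _ ≤ ((k : ℝ) / ((k : ℝ) + 1)) ^ α :=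
                Real.rpow_le_rpow_of_exponent_ge hf1 hf2 hα1.le
        have heq : (k : ℝ) ^ (-α) * ((k : ℝ) / ((k : ℝ) + 1)) ^ α = ((k : ℝ) + 1) ^ (-α) := by
          rw [Real.div_rpow hxpos.le hx1pos.le, Real.rpow_neg hxpos.le,
            Real.rpow_neg hx1pos.le]
          field_simp
        have h3 : (k : ℝ) ^ (-α) * ((k : ℝ) / ((k : ℝ) + 1))
            ≤ (k : ℝ) ^ (-α) * ((k : ℝ) / ((k : ℝ) + 1)) ^ α :=
          mul_le_mul_of_nonneg_left hfrac htpos.le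
        have h5 : 1 - ((k : ℝ))⁻¹ ≤ (k : ℝ) / ((k : ℝ) + 1) := by
          rw [← sub_nonneg]
          have e3 : (k : ℝ) / ((k : ℝ) + 1) - (1 - ((k : ℝ))⁻¹)
              = (((k : ℝ) + 1) * (k : ℝ))⁻¹ := by
            field_simp
            ring
          rw [e3]; positivity
        have h4 := mul_le_mul_of_nonneg_left h5 htpos.le
        rw [← heq]
        calc (k : ℝ) ^ (-α) - (k : ℝ) ^ (-α) * ((k : ℝ))⁻¹
            = (k : ℝ) ^ (-α) * (1 - ((k : ℝ))⁻¹) := by ring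
          _ ≤ (k : ℝ) ^ (-α) * ((k : ℝ) / ((k : ℝ) + 1)) := h4
          _ ≤ (k : ℝ) ^ (-α) * ((k : ℝ) / ((k : ℝ) + 1)) ^ α := h3
      -- combine
      have hak := hrec k (le_trans hKk₀ hkK)
      rw [hγk] at hak
      rw [hγk] at hnonneg
      have hIH' : (1 - ν * (c * (k : ℝ) ^ (-α))) * a k
          ≤ (1 - ν * (c * (k : ℝ) ^ (-α))) * (C * (k : ℝ) ^ (-α)) :=
        mul_le_mul_of_nonneg_left IH hnonneg
      have h6 : C * ((k : ℝ) ^ (-α) - (k : ℝ) ^ (-α) * ((k : ℝ))⁻¹)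
          ≤ C * (((k : ℝ) + 1) ^ (-α)) :=
        mul_le_mul_of_nonneg_left hstep hCpos.le
      have h7 : C * ((k : ℝ) ^ (-α) * ((k : ℝ))⁻¹)
          ≤ C * (ν * c / 2 * ((k : ℝ) ^ (-α)) ^ 2) :=
        mul_le_mul_of_nonneg_left hdiv hCpos.le
      have hC1' : 2 * c * M ≤ C * ν := by
        rw [div_le_iff₀ hν] at hC1; exact hC1
      have h8 : c ^ 2 * M ≤ ν * c * C / 2 := by
        have := mul_le_mul_of_nonneg_left hC1' (by positivity : (0 : ℝ) ≤ c / 2)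
        linarith
      have h8t : c ^ 2 * M * ((k : ℝ) ^ (-α)) ^ 2 ≤ ν * c * C / 2 * ((k : ℝ) ^ (-α)) ^ 2 :=
        mul_le_mul_of_nonneg_right h8 (sq_nonneg _)
      have hcast : ((k + 1 : ℕ) : ℝ) = (k : ℝ) + 1 := by push_cast; ring
      rw [hcast]
      linarith [hak, hIH', h6, h7, h8t]
end
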